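/- Let (H,⇀,↼) be a matched pair of actions on a Hopf algebra (H,•,1,Δ,ε,T). Then the braided-commutativity condition a•b=(a₁⇀b₁)•(a₂↼b₂) is equivalent to a↼b = T(a₁⇀b₁)•a₂•b₂, which is in turn equivalent to T(a⇀b) = (a₁↼b₁)•T(b₂)•T(a₂), for all a,b ∈ H. -/

import Mathlib

open TensorProduct

noncomputable section

variable (k H : Type*) [Field k] [Ring H] [HopfAlgebra k H]

/-- Multiplication of `H` as a linear map. -/
def mu : H ⊗[k] H →ₗ[k] H := LinearMap.mul' k H
/-- Comultiplication. -/
def delta : H →ₗ[k] H ⊗[k] H := Coalgebra.comul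
/-- Counit. -/
def eps : H →ₗ[k] k := Coalgebra.counit
/-- Flip `a⊗b ↦ b⊗a`. -/
def tau : H ⊗[k] H →ₗ[k] H ⊗[k] H := (TensorProduct.comm k H H).toLinearMap
/-- Associator. -/
def assocMap : (H ⊗[k] H) ⊗[k] H →ₗ[k] H ⊗[k] (H ⊗[k] H) :=
  (TensorProduct.assoc k H H H).toLinearMap
/-- Inverse associator. -/
def assocInv : H ⊗[k] (H ⊗[k] H) →ₗ[k] (H ⊗[k] H) ⊗[k] H :=
  (TensorProduct.assoc k H H H).symm.toLinearMap
/-- The middle-four interchange `(a⊗b)⊗(c⊗d) ↦ (a⊗c)⊗(b⊗d)`. -/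
def ttcMap : (H ⊗[k] H) ⊗[k] (H ⊗[k] H) →ₗ[k] (H ⊗[k] H) ⊗[k] (H ⊗[k] H) :=
  (TensorProduct.tensorTensorTensorComm k H H H H).toLinearMap
/-- `a⊗b ↦ (a₁⊗b₁)⊗(a₂⊗b₂)` (Sweedler notation). -/
def dd : H ⊗[k] H →ₗ[k] (H ⊗[k] H) ⊗[k] (H ⊗[k] H) :=
  ttcMap k H ∘ₗ map (delta k H) (delta k H)
/-- `a⊗b ↦ ((a₁⊗b₁)⊗(a₂⊗b₂))⊗(a₃⊗b₃)`. -/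
def ddd : H ⊗[k] H →ₗ[k] ((H ⊗[k] H) ⊗[k] (H ⊗[k] H)) ⊗[k] (H ⊗[k] H) :=
  map (dd k H) LinearMap.id ∘ₗ dd k H
/-- `a⊗b ↦ ε(a)ε(b)`. -/
def epseps : H ⊗[k] H →ₗ[k] k := LinearMap.mul' k k ∘ₗ map (eps k H) (eps k H)
/-- `σ(a⊗b) = (a₁⇀b₁)⊗(a₂↼b₂)` attached to a pair of "actions". -/
def sig (l r : H ⊗[k] H →ₗ[k] H) : H ⊗[k] H →ₗ[k] H ⊗[k] H :=
  map l r ∘ₗ dd k H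

/-- The antipode of `H`. -/
def anti : H →ₗ[k] H := HopfAlgebra.antipode k

/-- A matched pair of actions `(H,⇀,↼)` on the Hopf algebra `H` (Definition 2.1):
`l`, `r` are a left and a right action of `H` on itself making `H` a left and right
`H`-module coalgebra, satisfying (mp.1)–(mp.4) and the braided commutativity (★). -/
structure MatchedPairOfActions (l r : H ⊗[k] H →ₗ[k] H) : Prop where
  one_act : ∀ b : H, l ((1 : H) ⊗ₜ[k] b) = b
  mul_act : ∀ a b c : H, l ((a * b) ⊗ₜ[k] c) = l (a ⊗ₜ[k] l (b ⊗ₜ[k] c))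
  act_one : ∀ a : H, r (a ⊗ₜ[k] (1 : H)) = a
  act_mul : ∀ a b c : H, r (a ⊗ₜ[k] (b * c)) = r (r (a ⊗ₜ[k] b) ⊗ₜ[k] c)
  comul_l : delta k H ∘ₗ l = map l l ∘ₗ dd k H
  counit_l : eps k H ∘ₗ l = epseps k H
  comul_r : delta k H ∘ₗ r = map r r ∘ₗ dd k H
  counit_r : eps k H ∘ₗ r = epseps k H
  mp1 : ∀ a : H, l (a ⊗ₜ[k] (1 : H)) = eps k H a • (1 : H)
  mp2 : ∀ b : H, r ((1 : H) ⊗ₜ[k] b) = eps k H b • (1 : H)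
  mp3 : l ∘ₗ map LinearMap.id (mu k H) ∘ₗ assocMap k H
      = mu k H ∘ₗ map LinearMap.id l ∘ₗ assocMap k H ∘ₗ map (sig k H l r) LinearMap.id
  mp4 : r ∘ₗ map (mu k H) LinearMap.id
      = mu k H ∘ₗ map r LinearMap.id ∘ₗ assocInv k H ∘ₗ map LinearMap.id (sig k H l r) ∘ₗ
          assocMap k H
  star : mu k H ∘ₗ sig k H l r = mu k H

/-- The second product `a·b := a₁•(T(a₂)⇀b)` attached to a left action `l = ⇀`. -/
def cdot (l : H ⊗[k] H →ₗ[k] H) : H ⊗[k] H →ₗ[k] H :=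
  mu k H ∘ₗ map LinearMap.id l ∘ₗ assocMap k H ∘ₗ
    map (map LinearMap.id (anti k H) ∘ₗ delta k H) LinearMap.id

/-- The map `S(a) := a₁⇀T(a₂)` attached to a left action `l = ⇀`. -/
def Smap (l : H ⊗[k] H →ₗ[k] H) : H →ₗ[k] H :=
  l ∘ₗ map LinearMap.id (anti k H) ∘ₗ delta k H

/-!
In the convolution algebra of linear maps `H ⊗ H → H`, the module-coalgebra axioms say that `⇀`
is a coalgebra map, so it is convolution-invertible with inverse `T ∘ ⇀`; likewise the
multiplication `•` is a coalgebra map with inverse `T ∘ • = (a ⊗ b ↦ T(b) • T(a))`. The three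
conditions read `⇀ * ↼ = •`, `↼ = (T ∘ ⇀) * •` and `T ∘ ⇀ = ↼ * (T ∘ •)`, which are equivalent by
cancelling these units.
-/

section Convolution

open WithConv

variable {R C A : Type*} [CommSemiring R] [AddCommMonoid C] [Module R C] [Coalgebra R C]
  [Semiring A] [HopfAlgebra R A]

theorem HopfAlgebra.mul'_comp_map_antipode_comp_comm :
    LinearMap.mul' R A ∘ₗ map (HopfAlgebra.antipode R) (HopfAlgebra.antipode R) ∘ₗ
        (TensorProduct.comm R A A).toLinearMap =
      HopfAlgebra.antipode R ∘ₗ LinearMap.mul' R A := by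
  ext a b
  simp [HopfAlgebra.antipode_mul_antidistrib]

theorem CoalgHom.convOne_comp (φ : C →ₗc[R] A) :
    (1 : WithConv (A →ₗ[R] A)).ofConv ∘ₗ φ.toLinearMap = (1 : WithConv (C →ₗ[R] A)).ofConv := by
  rw [LinearMap.convOne_def, LinearMap.convOne_def, ofConv_toConv, ofConv_toConv,
    LinearMap.comp_assoc, φ.counit_comp]

theorem CoalgHom.antipode_comp_convMul_self (φ : C →ₗc[R] A) :
    toConv (HopfAlgebra.antipode R ∘ₗ φ.toLinearMap) * toConv φ.toLinearMap = 1 := by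
  have h := LinearMap.convMul_comp_coalgHom_distrib (toConv (HopfAlgebra.antipode R))
    (toConv LinearMap.id) φ
  rw [LinearMap.antipode_mul_id, φ.convOne_comp] at h
  exact WithConv.ext h.symm

theorem CoalgHom.self_convMul_antipode_comp (φ : C →ₗc[R] A) :
    toConv φ.toLinearMap * toConv (HopfAlgebra.antipode R ∘ₗ φ.toLinearMap) = 1 := by
  have h := LinearMap.convMul_comp_coalgHom_distrib (toConv LinearMap.id)
    (toConv (HopfAlgebra.antipode R)) φ
  rw [LinearMap.id_mul_antipode, φ.convOne_comp] at h
  exact WithConv.ext h.symm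

def CoalgHom.convUnit (φ : C →ₗc[R] A) : (WithConv (C →ₗ[R] A))ˣ where
  val := toConv φ
  inv := toConv (HopfAlgebra.antipode R ∘ₗ φ.toLinearMap)
  val_inv := φ.self_convMul_antipode_comp
  inv_val := φ.antipode_comp_convMul_self

end Convolution

variable {k H}

theorem epseps_eq_counit : epseps k H = Coalgebra.counit := by
  ext a b
  simp [epseps, eps, mul_comm]

def coalgHomOfComul (l : H ⊗[k] H →ₗ[k] H) (hcomul : delta k H ∘ₗ l = map l l ∘ₗ dd k H)
    (hcounit : eps k H ∘ₗ l = epseps k H) : H ⊗[k] H →ₗc[k] H where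
  toLinearMap := l
  counit_comp := hcounit.trans epseps_eq_counit
  map_comp_comul := hcomul.symm

theorem star_iff_rightaction_iff_T_harpoon_general (l r : H ⊗[k] H →ₗ[k] H)
    (hcomul_l : delta k H ∘ₗ l = map l l ∘ₗ dd k H)
    (hcounit_l : eps k H ∘ₗ l = epseps k H) :
    ((mu k H ∘ₗ sig k H l r = mu k H) ↔
      (r = mu k H ∘ₗ map (anti k H ∘ₗ l) (mu k H) ∘ₗ dd k H)) ∧
    ((r = mu k H ∘ₗ map (anti k H ∘ₗ l) (mu k H) ∘ₗ dd k H) ↔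
      (anti k H ∘ₗ l
        = mu k H ∘ₗ map r (mu k H ∘ₗ map (anti k H) (anti k H) ∘ₗ tau k H) ∘ₗ dd k H)) := by
  set u := (coalgHomOfComul l hcomul_l hcounit_l).convUnit
  set v := (Bialgebra.mulCoalgHom k H).convUnit
  have hstar : mu k H ∘ₗ sig k H l r = mu k H ↔ ↑u * WithConv.toConv r = ↑v :=
    WithConv.toConv_injective.eq_iff.symm
  have hr : r = mu k H ∘ₗ map (anti k H ∘ₗ l) (mu k H) ∘ₗ dd k H ↔
      WithConv.toConv r = ↑u⁻¹ * ↑v :=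
    WithConv.toConv_injective.eq_iff.symm
  have hT : anti k H ∘ₗ l
        = mu k H ∘ₗ map r (mu k H ∘ₗ map (anti k H) (anti k H) ∘ₗ tau k H) ∘ₗ dd k H ↔
      ↑u⁻¹ = WithConv.toConv r * ↑v⁻¹ := by
    rw [← WithConv.toConv_injective.eq_iff]
    simp only [mu, anti, tau, HopfAlgebra.mul'_comp_map_antipode_comp_comm]
    rfl
  rw [hstar, hr, hT]
  exact ⟨(Units.eq_inv_mul_iff_mul_eq u).symm,
    ((Units.eq_mul_inv_iff_mul_eq v).trans eq_comm).symm⟩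

/-- for a left action `l = ⇀` and a right action `r = ↼` of a Hopf algebra `H`
on itself making `H` a left/right `H`-module coalgebra, the braided commutativity
`a•b = (a₁⇀b₁)•(a₂↼b₂)` is equivalent to `a↼b = T(a₁⇀b₁)•a₂•b₂`, which is in turn
equivalent to `T(a⇀b) = (a₁↼b₁)•T(b₂)•T(a₂)`. -/
theorem star_iff_rightaction_iff_T_harpoon (l r : H ⊗[k] H →ₗ[k] H)
    (hl1 : ∀ b : H, l ((1 : H) ⊗ₜ[k] b) = b)
    (hl2 : ∀ a b c : H, l ((a * b) ⊗ₜ[k] c) = l (a ⊗ₜ[k] l (b ⊗ₜ[k] c)))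
    (hr1 : ∀ a : H, r (a ⊗ₜ[k] (1 : H)) = a)
    (hr2 : ∀ a b c : H, r (a ⊗ₜ[k] (b * c)) = r (r (a ⊗ₜ[k] b) ⊗ₜ[k] c))
    (hcomul_l : delta k H ∘ₗ l = map l l ∘ₗ dd k H)
    (hcounit_l : eps k H ∘ₗ l = epseps k H)
    (hcomul_r : delta k H ∘ₗ r = map r r ∘ₗ dd k H)
    (hcounit_r : eps k H ∘ₗ r = epseps k H) :
    ((mu k H ∘ₗ sig k H l r = mu k H) ↔
      (r = mu k H ∘ₗ map (anti k H ∘ₗ l) (mu k H) ∘ₗ dd k H)) ∧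
    ((r = mu k H ∘ₗ map (anti k H ∘ₗ l) (mu k H) ∘ₗ dd k H) ↔
      (anti k H ∘ₗ l
        = mu k H ∘ₗ map r (mu k H ∘ₗ map (anti k H) (anti k H) ∘ₗ tau k H) ∘ₗ dd k H)) :=
  star_iff_rightaction_iff_T_harpoon_general l r hcomul_l hcounit_l

end
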